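/- Let α be an infinite permutation whose underlying word s is ultimately periodic with minimal period p ≥ 2, and suppose no subpermutation of α along an arithmetic progression with difference p is ultimately monotone. Then p_α(p+1) ≥ 2p; in particular p_α(n) = n for all n is impossible. -/

import Mathlib

open Filter

/-- `a` is a representative of the infinite permutation (linear order on ℕ) `r`. -/
def Represents (a : ℕ → ℝ) (r : ℕ → ℕ → Prop) : Prop :=
  ∀ i j : ℕ, r i j ↔ a i < a j

/-- An equidistributed sequence of pairwise distinct reals in `[0,1]`. -/
def EquidistSeq (a : ℕ → ℝ) : Prop :=
  (∀ n, a n ∈ Set.Icc (0:ℝ) 1) ∧ Function.Injective a ∧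
    ∀ t ∈ Set.Icc (0:ℝ) 1,
      Tendsto (fun n => (((Finset.range n).filter fun i => a i < t).card : ℝ) / n)
        atTop (nhds t)

/-- An equidistributed infinite permutation. -/
def EquidistPerm (r : ℕ → ℕ → Prop) : Prop :=
  ∃ a : ℕ → ℝ, EquidistSeq a ∧ Represents a r

/-- `r` has an `N`-monotone subpermutation. -/
def HasNMonotone (r : ℕ → ℕ → Prop) (N : ℕ) : Prop :=
  ∃ n : ℕ → ℕ, StrictMono n ∧ (∀ i, n (i+1) - n i ≤ N) ∧
    ((∀ i, r (n i) (n (i+1))) ∨ (∀ i, r (n (i+1)) (n i)))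

/-- `r` is ultimately `t`-periodic. -/
def UltPeriodicPerm (r : ℕ → ℕ → Prop) (t : ℕ) : Prop :=
  ∃ n0 : ℕ, ∀ i ≥ n0, ∀ j ≥ n0, (r i j ↔ r (i+t) (j+t))

/-- `α[i]` is an `N`-maximal element of `r`. -/
def NMaximal (r : ℕ → ℕ → Prop) (N i : ℕ) : Prop :=
  N < i ∧ ∀ j, j ≠ i → i ≤ j + N → j ≤ i + N → r j i

/-- `α[i]` is an `N`-minimal element of `r`. -/
def NMinimal (r : ℕ → ℕ → Prop) (N i : ℕ) : Prop :=
  N < i ∧ ∀ j, j ≠ i → i ≤ j + N → j ≤ i + N → r i j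

/-- The factor (order type) of length `n` of `r` at position `m`. -/
def permFactor (r : ℕ → ℕ → Prop) (m n : ℕ) : Fin n → Fin n → Prop :=
  fun k l => r (m + (k : ℕ)) (m + (l : ℕ))

/-- The factor complexity of an infinite permutation. -/
noncomputable def permComplexity (r : ℕ → ℕ → Prop) (n : ℕ) : ℕ :=
  Set.ncard {f : Fin n → Fin n → Prop | ∃ m, f = permFactor r m n}

open Classical in
/-- The underlying binary word of an infinite permutation. -/
noncomputable def underlying (r : ℕ → ℕ → Prop) : ℕ → ℕ :=
  fun i => if r i (i+1) then 0 else 1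

/-- The factor of length `n` of the infinite word `w` at position `m`. -/
def factorAt (w : ℕ → ℕ) (m n : ℕ) : List ℕ :=
  (List.range n).map fun k => w (m + k)

/-- `u` is a factor of the infinite word `w`. -/
def IsFactor (w : ℕ → ℕ) (u : List ℕ) : Prop :=
  ∃ m, u = factorAt w m u.length

/-- The factor complexity of an infinite word. -/
noncomputable def wordComplexity (w : ℕ → ℕ) (n : ℕ) : ℕ :=
  Set.ncard {u : List ℕ | ∃ m, u = factorAt w m n}

def LeftSpecial (w : ℕ → ℕ) (u : List ℕ) : Prop :=
  IsFactor w (0 :: u) ∧ IsFactor w (1 :: u)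

def RightSpecial (w : ℕ → ℕ) (u : List ℕ) : Prop :=
  IsFactor w (u ++ [0]) ∧ IsFactor w (u ++ [1])

def Bispecial (w : ℕ → ℕ) (u : List ℕ) : Prop :=
  LeftSpecial w u ∧ RightSpecial w u

/-- A Christoffel word for `w`: `0b1` or `1b0` with `b` a bispecial factor of `w`. -/
def IsChristoffel (w : ℕ → ℕ) (u : List ℕ) : Prop :=
  ∃ b, Bispecial w b ∧ (u = 0 :: (b ++ [1]) ∨ u = 1 :: (b ++ [0]))

/-- The Sturmian word `s_{σ,ρ}`. -/
noncomputable def sturmianWord (σ ρ : ℝ) : ℕ → ℕ :=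
  fun k => if Int.fract (ρ + (k : ℝ) * σ) < 1 - σ then 0 else 1

/-- The word `w` is ultimately `p`-periodic. -/
def UltPeriodicWord (w : ℕ → ℕ) (p : ℕ) : Prop :=
  ∃ N : ℕ, ∀ i ≥ N, w (i + p) = w i

/-- The word defined by `s[k] = ⌊(k+1)σ⌋ − ⌊kσ⌋`. -/
noncomputable def floorWord (σ : ℝ) : ℕ → ℕ :=
  fun k => (⌊((k : ℝ) + 1) * σ⌋ - ⌊(k : ℝ) * σ⌋).toNat

/-!
For each residue `i` modulo `p`, the failure of ultimate monotonicity along `i + kp` provides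
arbitrarily late positions `m ≡ i` with `α[m] ≺ α[m+p]` and others with `α[m] ≻ α[m+p]`. These
`2p` positions have pairwise distinct factors of length `p + 1`: two of them with different
residues already differ in their underlying words of length `p`, since equal factors of length `p`
at distinct residues past the preperiod would make `s` ultimately periodic with a period smaller
than `p`; two with the same residue differ in the comparison of the first and last entries.
-/

section Words

variable {w : ℕ → ℕ} {p N : ℕ}

lemma factorAt_eq_factorAt_iff {m m' n : ℕ} :
    factorAt w m n = factorAt w m' n ↔ ∀ k < n, w (m + k) = w (m' + k) := by
  simp [factorAt, List.ext_getElem_iff]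

lemma apply_add_mul_of_periodic_from (hN : ∀ i ≥ N, w (i + p) = w i) {i : ℕ} (hi : N ≤ i)
    (t : ℕ) : w (i + t * p) = w i := by
  induction t with
  | zero => simp
  | succ t ih => rw [add_one_mul, ← add_assoc, hN _ (by omega), ih]

lemma UltPeriodicWord.mod {d : ℕ} (hp : UltPeriodicWord w p) (hd : UltPeriodicWord w d) :
    UltPeriodicWord w (d % p) := by
  obtain ⟨N, hN⟩ := hp
  obtain ⟨M, hM⟩ := hd
  refine ⟨max N M, fun j hj => ?_⟩
  calc w (j + d % p) = w (j + d % p + d / p * p) :=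
        (apply_add_mul_of_periodic_from hN (by omega) _).symm
    _ = w (j + d) := by rw [add_assoc, Nat.mod_add_div']
    _ = w j := hM j (by omega)

/-- Past the preperiod, a repetition of a factor of length `p` at distance `d` propagates to
the whole tail, because every later position is congruent modulo `p` to one inside the factor. -/
lemma ultPeriodicWord_of_factorAt_eq (hp : 0 < p) (hN : ∀ i ≥ N, w (i + p) = w i) {m d : ℕ}
    (hm : N ≤ m) (h : factorAt w m p = factorAt w (m + d) p) : UltPeriodicWord w d := by
  rw [factorAt_eq_factorAt_iff] at h
  refine ⟨m, fun j hj => ?_⟩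
  obtain ⟨k, t, hk, rfl⟩ : ∃ k t, k < p ∧ j = m + k + t * p :=
    ⟨(j - m) % p, (j - m) / p, Nat.mod_lt _ hp, by rw [add_assoc, Nat.mod_add_div']; omega⟩
  calc w (m + k + t * p + d) = w (m + d + k + t * p) := by ring_nf
    _ = w (m + k) := by rw [apply_add_mul_of_periodic_from hN (by omega), ← h k hk]
    _ = w (m + k + t * p) := (apply_add_mul_of_periodic_from hN (by omega) t).symm

lemma mod_eq_of_factorAt_eq (hp : 0 < p) (hN : ∀ i ≥ N, w (i + p) = w i)
    (hmin : ∀ q : ℕ, 1 ≤ q → q < p → ¬ UltPeriodicWord w q) {m m' : ℕ} (hm : N ≤ m)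
    (hm' : N ≤ m') (h : factorAt w m p = factorAt w m' p) : m % p = m' % p := by
  wlog hle : m ≤ m' generalizing m m'
  · exact (this hm' hm h.symm (by omega)).symm
  obtain ⟨d, rfl⟩ := Nat.exists_eq_add_of_le hle
  have hd : d % p = 0 := by
    by_contra hd
    exact hmin (d % p) (by omega) (Nat.mod_lt _ hp)
      (UltPeriodicWord.mod ⟨N, hN⟩ (ultPeriodicWord_of_factorAt_eq hp hN hm h))
  rw [Nat.add_mod, hd, add_zero, Nat.mod_mod]

end Words

section Permutations

variable {r : ℕ → ℕ → Prop}

lemma factorAt_underlying_eq_of_permFactor_eq {m m' n : ℕ}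
    (h : permFactor r m (n + 1) = permFactor r m' (n + 1)) :
    factorAt (underlying r) m n = factorAt (underlying r) m' n := by
  rw [factorAt_eq_factorAt_iff]
  intro k hk
  have hstep := congrFun₂ h (Fin.castSucc ⟨k, hk⟩) (Fin.succ ⟨k, hk⟩)
  simp only [permFactor, Fin.val_castSucc, Fin.val_succ, ← add_assoc] at hstep
  simp only [underlying]
  split_ifs <;> simp_all

lemma permFactor_zero_last (m n : ℕ) : permFactor r m (n + 1) 0 (Fin.last n) = r m (m + n) := by
  simp [permFactor]

lemma card_le_permComplexity {ι : Type*} [Fintype ι] {n : ℕ} {pos : ι → ℕ}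
    (hinj : Function.Injective fun x => permFactor r (pos x) n) :
    Fintype.card ι ≤ permComplexity r n := by
  rw [← Nat.card_eq_fintype_card, ← Nat.card_range_of_injective hinj, Nat.card_coe_set_eq]
  exact Set.ncard_le_ncard (by rintro _ ⟨x, rfl⟩; exact ⟨pos x, rfl⟩) (Set.toFinite _)

lemma exists_step_iff_of_not_ultMonotone [Std.Trichotomous r] {p i : ℕ} (hp : 0 < p)
    (h : ¬ ∃ K : ℕ, (∀ k ≥ K, r (i + k * p) (i + (k + 1) * p)) ∨
      (∀ k ≥ K, r (i + (k + 1) * p) (i + k * p)))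
    (K : ℕ) (b : Bool) : ∃ k ≥ K, (r (i + k * p) (i + k * p + p) ↔ b = true) := by
  push Not at h
  obtain ⟨⟨k, hk, hdown⟩, ⟨k', hk', hup⟩⟩ := h K
  simp only [add_one_mul, ← add_assoc] at hdown hup
  cases b
  · exact ⟨k, hk, by simpa using hdown⟩
  · refine ⟨k', hk', ?_⟩
    rcases trichotomous_of r (i + k' * p) (i + k' * p + p) with h | h | h
    · simpa using h
    · omega
    · exact absurd h hup

end Permutations

theorem stmt14 (r : ℕ → ℕ → Prop) [IsStrictTotalOrder ℕ r] (p : ℕ) (hp : 2 ≤ p)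
    (hper : UltPeriodicWord (underlying r) p)
    (hminper : ∀ q : ℕ, 1 ≤ q → q < p → ¬ UltPeriodicWord (underlying r) q)
    (hnomon : ∀ i : ℕ, ¬ ∃ K : ℕ,
      (∀ k ≥ K, r (i + k * p) (i + (k + 1) * p)) ∨
        (∀ k ≥ K, r (i + (k + 1) * p) (i + k * p))) :
    2 * p ≤ permComplexity r (p + 1) ∧
      ¬ ∀ n : ℕ, 1 ≤ n → permComplexity r n = n := by
  obtain ⟨N, hN⟩ := hper
  have hpos : ∀ x : Fin p × Bool, ∃ m ≥ N, m % p = x.1 ∧ (r m (m + p) ↔ x.2 = true) := by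
    rintro ⟨i, b⟩
    obtain ⟨k, hk, hkb⟩ := exists_step_iff_of_not_ultMonotone (by omega) (hnomon i) N b
    refine ⟨i + k * p, by nlinarith, by simp [Nat.mod_eq_of_lt i.isLt], hkb⟩
  choose pos hposN hposmod hposdir using hpos
  have hinj : Function.Injective fun x => permFactor r (pos x) (p + 1) := by
    rintro ⟨i, b⟩ ⟨j, c⟩ h
    obtain rfl : i = j := Fin.ext <| by
      simpa only [hposmod] using mod_eq_of_factorAt_eq (by omega) hN hminper (hposN _)
        (hposN _) (factorAt_underlying_eq_of_permFactor_eq h)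
    have hdir := congrFun₂ h 0 (Fin.last p)
    simp only [permFactor_zero_last, hposdir] at hdir
    rw [Bool.eq_iff_iff.mpr hdir.to_iff]
  have hcard : 2 * p ≤ permComplexity r (p + 1) := by
    simpa [mul_comm] using card_le_permComplexity hinj
  exact ⟨hcard, fun h => by have := h (p + 1) (by omega); omega⟩
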